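/- Let n ≥ 2, let 1 ≤ k ≤ n, and let N_k = M_1 · M_2 ⋯ M_k. Then every point of the form N_k·c, where c ∈ ℝⁿ has all coordinates strictly positive and coordinates summing to 1 (i.e., every point of the open convex hull of the columns of N_k), has strictly negative first coordinate. Consequently, the open standard simplex (the open convex hull of the columns of the identity matrix) is disjoint from the open convex hull of the columns of N_k. (This is the geometric content of the theorem that every unfolding of the n-simplex yields a net.) -/

import Mathlib

/-- The reflection matrix `M_a` (0-indexed). -/
noncomputable def reflMat (n : ℕ) (a : Fin n) : Matrix (Fin n) (Fin n) ℝ :=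
  fun i j => if j = a then (if i = a then -1 else 2 / ((n : ℝ) - 1)) else if i = j then 1 else 0

/-- `N_k = M_1 ⬝ M_2 ⬝ ⋯ ⬝ M_k`. -/
noncomputable def chainMat (n k : ℕ) : Matrix (Fin n) (Fin n) ℝ :=
  ((((List.finRange n).take k)).map (reflMat n)).prod

/-- The open convex hull of the columns of a matrix `A`: all points `A ⬝ c` where `c`
has strictly positive coordinates summing to `1`. -/
def openSimplexOf {n : ℕ} (A : Matrix (Fin n) (Fin n) ℝ) : Set (Fin n → ℝ) :=
  {x | ∃ c : Fin n → ℝ, (∀ i, 0 < c i) ∧ (∑ i, c i = 1) ∧ x = A.mulVec c}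

lemma chainMat_zero (n : ℕ) : chainMat n 0 = 1 := by
  simp [chainMat]

lemma chainMat_succ (n k : ℕ) (h : k < n) :
    chainMat n (k+1) = chainMat n k * reflMat n ⟨k, h⟩ := by
  unfold chainMat
  rw [List.take_succ]
  have h1 : (List.finRange n)[k]? = some ⟨k, h⟩ := by
    rw [List.getElem?_eq_getElem (by simpa using h)]
    simp
  rw [h1]
  simp

lemma row_zero (n : ℕ) (hn : 2 ≤ n) (k : ℕ) (hk1 : 1 ≤ k) (hkn : k ≤ n) :
    chainMat n k ⟨0, Nat.lt_of_lt_of_le (by norm_num) hn⟩ ⟨0, Nat.lt_of_lt_of_le (by norm_num) hn⟩ = -1 ∧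
    (∀ j : Fin n, chainMat n k ⟨0, Nat.lt_of_lt_of_le (by norm_num) hn⟩ j ≤ 0) ∧
    (∀ j : Fin n, k ≤ j.val → chainMat n k ⟨0, Nat.lt_of_lt_of_le (by norm_num) hn⟩ j = 0) := by
  induction k, hk1 using Nat.le_induction with
  | base =>
    have h1 : chainMat n 1 = reflMat n ⟨0, by omega⟩ := by
      rw [chainMat_succ n 0 (by omega), chainMat_zero, one_mul]
    rw [h1]
    refine ⟨by simp [reflMat], fun j => ?_, fun j hj => ?_⟩
    · by_cases hj : j = ⟨0, by omega⟩
      · simp [reflMat, hj]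
      · simp only [reflMat, if_neg hj, if_neg (Ne.symm hj)]
        norm_num
    · have hj0 : j ≠ ⟨0, by omega⟩ := by
        intro h; rw [h] at hj; simp at hj
      simp only [reflMat, if_neg hj0, if_neg (Ne.symm hj0)]
  | succ k hk IH =>
    have hkn' : k ≤ n := by omega
    have hklt : k < n := by omega
    obtain ⟨I1, I2, I3⟩ := IH hkn'
    set a : Fin n := ⟨k, hklt⟩ with ha
    set z : Fin n := (⟨0, by omega⟩ : Fin n) with hz
    have hrow : ∀ j : Fin n, chainMat n (k+1) z j =
        ∑ l, chainMat n k z l * reflMat n a l j := by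
      intro j
      rw [chainMat_succ n k hklt]
      rfl
    have hne : ∀ j : Fin n, j ≠ a → chainMat n (k+1) z j = chainMat n k z j := by
      intro j hj
      rw [hrow]
      have : ∀ l, chainMat n k z l * reflMat n a l j =
          if l = j then chainMat n k z l else 0 := by
        intro l
        simp only [reflMat, hj, if_neg]
        by_cases hl : l = j <;> simp [hl]
      rw [Finset.sum_congr rfl (fun l _ => this l)]
      simp
    have ht : (0:ℝ) ≤ 2 / ((n : ℝ) - 1) := by
      apply div_nonneg (by norm_num)
      have : (2:ℝ) ≤ (n:ℝ) := by exact_mod_cast hn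
      linarith
    have haval : chainMat n (k+1) z a ≤ 0 := by
      rw [hrow]
      apply Finset.sum_nonpos
      intro l _
      by_cases hl : l = a
      · rw [hl, I3 a (le_refl k)]; simp
      · simp only [reflMat, if_pos rfl, if_neg hl]
        exact mul_nonpos_of_nonpos_of_nonneg (I2 l) ht
    have hza : z ≠ a := by
      intro h
      have := congrArg Fin.val h
      simp [hz, ha] at this
      omega
    refine ⟨by rw [hne z hza]; exact I1, fun j => ?_, fun j hj => ?_⟩
    · by_cases hj : j = a
      · rw [hj]; exact haval
      · rw [hne j hj]; exact I2 j
    · have hja : j ≠ a := by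
        intro h; rw [h] at hj; simp [ha] at hj; 
      rw [hne j hja]
      exact I3 j (by omega)

/-- For `n ≥ 2` and `1 ≤ k ≤ n`, every point of the open convex hull of the columns of
`N_k = M_1 ⋯ M_k` has strictly negative first coordinate; consequently the open standard
simplex is disjoint from the open convex hull of the columns of `N_k`. -/
theorem openSimplex_chainMat_disjoint (n : ℕ) (hn : 2 ≤ n) (k : ℕ) (hk1 : 1 ≤ k)
    (hkn : k ≤ n) :
    (∀ c : Fin n → ℝ, (∀ i, 0 < c i) → (∑ i, c i = 1) →
      (chainMat n k).mulVec c ⟨0, by omega⟩ < 0) ∧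
    Disjoint (openSimplexOf (1 : Matrix (Fin n) (Fin n) ℝ)) (openSimplexOf (chainMat n k)) := by
  obtain ⟨R1, R2, _⟩ := row_zero n hn k hk1 hkn
  have main : ∀ c : Fin n → ℝ, (∀ i, 0 < c i) → (∑ i, c i = 1) →
      (chainMat n k).mulVec c ⟨0, by omega⟩ < 0 := by
    intro c hc _
    have : (chainMat n k).mulVec c ⟨0, by omega⟩ =
        ∑ j, chainMat n k ⟨0, by omega⟩ j * c j := rfl
    rw [this]
    have h0 : ∑ j : Fin n, (0:ℝ) = 0 := by simp
    calc ∑ j, chainMat n k ⟨0, by omega⟩ j * c j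
        < ∑ j : Fin n, (0:ℝ) := by
          apply Finset.sum_lt_sum
          · intro j _
            exact mul_nonpos_of_nonpos_of_nonneg (R2 j) (hc j).le
          · exact ⟨⟨0, by omega⟩, Finset.mem_univ _, by
              rw [R1]; nlinarith [hc ⟨0, by omega⟩]⟩
      _ = 0 := h0
  refine ⟨main, Set.disjoint_left.2 ?_⟩
  rintro x ⟨c, hc, hs, rfl⟩ ⟨d, hd, hds, heq⟩
  have h1 : (1 : Matrix (Fin n) (Fin n) ℝ).mulVec c = c := Matrix.one_mulVec c
  have hneg := main d hd hds
  rw [← heq, h1] at hneg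
  exact absurd hneg (not_lt.2 (hc ⟨0, by omega⟩).le)
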